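/- arXiv:1502.02393 — 2 statements merged into one kernel-verified Lean document; each statement's English description precedes it below -/
import Mathlib

section
/- For the braid arrangement A_2 in K^3 with hyperplanes ker(x_i - x_j), 1 ≤ i < j ≤ 3, and constant multiplicity m: if m is even, the module D(A_2, m) is free with exponents {0, 3m/2, 3m/2}; if m is odd, it is free with exponents {0, (3m-1)/2, (3m+1)/2}. -/
/-!
Write `u = x₀ - x₁`, `v = x₁ - x₂`, `w = u + v = x₀ - x₂`. A vector `f` lies in `D(A₂, m)` iff
`u ^ m ∣ f₀ - f₁`, `v ^ m ∣ f₁ - f₂` and `w ^ m ∣ f₀ - f₂`. Modulo `∂₀ + ∂₁ + ∂₂` only the pair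
`(f₀ - f₁, f₁ - f₂)` matters, and since `u ^ m, v ^ m, w ^ m` are pairwise coprime, Cramer's rule
shows that two members whose pairs have determinant `u ^ m v ^ m w ^ m` complete `∂₀ + ∂₁ + ∂₂`
to a basis (Saito's criterion in rank two).

Such members come from syzygies `u ^ m a + v ^ m b + w ^ m c = 0` by forms of degrees
`k₁ = ⌊m/2⌋` and `k₂ = ⌈m/2⌉`, through the pair `(u ^ m a, v ^ m b)`. The determinant of two of
them is `u ^ m v ^ m (a₁ b₂ - a₂ b₁)`, and `a₁ b₂ - a₂ b₁ = δ w ^ m` with `δ` of degree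
`k₁ + k₂ - m = 0`. Dehomogenizing (`u = X`, `v = 1`), syzygies of degree `< n` form a space of
dimension `≥ 2n - m`, and in characteristic zero there are none of degree `< m/2`: the Wronskian
of `X ^ m a` and `b` would be divisible by `X ^ (m-1) (X+1) ^ (m-1)`, too much for its degree.
Hence a nonzero syzygy of degree `k₁` is primitive, counting dimensions gives one of degree `k₂`
that is not a multiple of it, and for this pair `δ ≠ 0`.
-/

open MvPolynomial

/-- `θ` is an `S`-basis of the set `D` of derivation coefficient vectors:
each `θ j ∈ D` and every `g ∈ D` is a unique `S`-linear combination of the `θ j`. -/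
def isBasisOf {K : Type} [Field K] {ℓ n : ℕ}
    (D : (Fin ℓ → MvPolynomial (Fin ℓ) K) → Prop)
    (θ : Fin n → Fin ℓ → MvPolynomial (Fin ℓ) K) : Prop :=
  (∀ j, D (θ j)) ∧
    ∀ g, D g → ∃! c : Fin n → MvPolynomial (Fin ℓ) K, g = ∑ j, c j • θ j

/-- The derivation `∑ f i ∂/∂x i` is homogeneous of polynomial degree `p`. -/
def homogOf {K : Type} [Field K] {ℓ : ℕ}
    (f : Fin ℓ → MvPolynomial (Fin ℓ) K) (p : ℕ) : Prop :=
  ∀ i, f i = 0 ∨ (f i).IsHomogeneous p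

/-- `D(B_ℓ, m)` for the braid arrangement with hyperplanes `ker(x_i - x_j)`, `i < j`, and
constant multiplicity `m`: the derivation `∑ fᵢ ∂/∂xᵢ` sends `x_i - x_j` to `f i - f j`. -/
def braidD (K : Type) [Field K] (ℓ m : ℕ) (f : Fin ℓ → MvPolynomial (Fin ℓ) K) : Prop :=
  ∀ i j : Fin ℓ, i < j → (X i - X j : MvPolynomial (Fin ℓ) K) ^ m ∣ f i - f j

open scoped Polynomial

namespace Polynomial

variable {K : Type*} [Field K]

lemma natDegree_lt_of_mem_degreeLT {p : K[X]} {n : ℕ} (hp : p ≠ 0) (h : p ∈ K[X]_n) :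
    p.natDegree < n := by
  rwa [mem_degreeLT, ← natDegree_lt_iff_degree_lt hp] at h

lemma notMem_degreeLT_of_le_natDegree {p : K[X]} {n : ℕ} (hp : p ≠ 0) (h : n ≤ p.natDegree) :
    p ∉ K[X]_n := fun hn => (natDegree_lt_of_mem_degreeLT hp hn).not_ge h

lemma mem_degreeLT_succ_iff {p : K[X]} {k : ℕ} : p ∈ K[X]_(k + 1) ↔ p.natDegree ≤ k := by
  rw [degreeLT_succ_eq_degreeLE, mem_degreeLE, natDegree_le_iff_degree_le]

lemma mul_mem_degreeLT {p q : K[X]} {a b : ℕ} (hp : p ∈ K[X]_(a + 1)) (hq : q ∈ K[X]_b) :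
    p * q ∈ K[X]_(a + b) := by
  rcases eq_or_ne q 0 with rfl | hq0
  · simp
  rcases eq_or_ne p 0 with rfl | hp0
  · simp
  have := natDegree_lt_of_mem_degreeLT hq0 hq
  rw [mem_degreeLT_succ_iff] at hp
  rw [mem_degreeLT, ← natDegree_lt_iff_degree_lt (mul_ne_zero hp0 hq0), natDegree_mul hp0 hq0]
  omega

lemma mem_degreeLT_sub_of_mul_mem {p q : K[X]} {b c : ℕ} (hpq : p * q ∈ K[X]_c)
    (hp : p ∉ K[X]_b) : q ∈ K[X]_(c - b) := by
  rcases eq_or_ne q 0 with rfl | hq0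
  · exact zero_mem _
  have hp0 : p ≠ 0 := by rintro rfl; exact hp (zero_mem _)
  rw [mem_degreeLT, ← natDegree_lt_iff_degree_lt hp0, not_lt] at hp
  have := natDegree_lt_of_mem_degreeLT (mul_ne_zero hp0 hq0) hpq
  rw [natDegree_mul hp0 hq0] at this
  rw [mem_degreeLT, ← natDegree_lt_iff_degree_lt hq0]
  omega

lemma eq_zero_of_dvd_of_mem_degreeLT {p q : K[X]} {n : ℕ} (h : p ∣ q) (hq : q ∈ K[X]_n)
    (hp : p ∉ K[X]_n) : q = 0 := by
  obtain ⟨r, rfl⟩ := h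
  have hr : r ∈ K[X]_(n - n) := mem_degreeLT_sub_of_mul_mem hq hp
  simp_all [mem_degreeLT]

lemma X_pow_mem_degreeLT (m : ℕ) : (X : K[X]) ^ m ∈ K[X]_(m + 1) := by
  rw [mem_degreeLT_succ_iff, natDegree_X_pow]

lemma X_add_one_pow_mem_degreeLT (m : ℕ) : (X + 1 : K[X]) ^ m ∈ K[X]_(m + 1) := by
  rw [mem_degreeLT_succ_iff, ← map_one C, natDegree_pow_X_add_C]

lemma X_pow_notMem_degreeLT {m n : ℕ} (h : n ≤ m) : (X : K[X]) ^ m ∉ K[X]_n :=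
  notMem_degreeLT_of_le_natDegree (pow_ne_zero _ X_ne_zero) (by rwa [natDegree_X_pow])

lemma X_add_one_pow_notMem_degreeLT {m n : ℕ} (h : n ≤ m) : (X + 1 : K[X]) ^ m ∉ K[X]_n := by
  rw [← map_one C]
  exact notMem_degreeLT_of_le_natDegree (pow_ne_zero _ (X_add_C_ne_zero 1))
    (by rwa [natDegree_pow_X_add_C])

theorem exists_eq_C_mul_of_wronskian_eq_zero [CharZero K] {f g : K[X]} (hg : g ≠ 0)
    (hw : wronskian f g = 0) : ∃ c : K, f = C c * g := by
  classical
  obtain ⟨f', g', hf, hg', hunit⟩ := extract_gcd f g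
  set d := gcd f g
  have hd : d ≠ 0 := fun h => hg ((gcd_eq_zero_iff f g).mp h).2
  have hw' : wronskian f' g' = 0 := by
    have : wronskian f g = d ^ 2 * wronskian f' g' := by
      rw [hf, hg']
      simp only [wronskian, derivative_mul]
      ring
    simpa [this, hd] using hw
  obtain ⟨hf'', hg''⟩ := ((gcd_isUnit_iff f' g').mp hunit).wronskian_eq_zero_iff.mp hw'
  rw [eq_C_of_natDegree_eq_zero (derivative_eq_zero.mp hf'')] at hf
  rw [eq_C_of_natDegree_eq_zero (derivative_eq_zero.mp hg'')] at hg'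
  have hb : g'.coeff 0 ≠ 0 := by
    rintro h
    rw [h, map_zero, mul_zero] at hg'
    exact hg hg'
  refine ⟨f'.coeff 0 / g'.coeff 0, ?_⟩
  rw [hf, hg', ← mul_assoc, mul_comm (C _), mul_assoc, ← map_mul, div_mul_cancel₀ _ hb]

lemma eq_of_isHomogeneous_of_aeval_eq {R : Type*} [CommSemiring R] {p q : MvPolynomial (Fin 2) R}
    {n : ℕ} (hp : p.IsHomogeneous n) (hq : q.IsHomogeneous n)
    (h : MvPolynomial.aeval ![(X : R[X]), 1] p = MvPolynomial.aeval ![X, 1] q) : p = q :=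
  (homogenize_eq_of_isHomogeneous hp h).symm.trans (homogenize_eq_of_isHomogeneous hq rfl)

lemma _root_.MvPolynomial.isHomogeneous_X_add_X_pow (m : ℕ) :
    ((MvPolynomial.X 0 + MvPolynomial.X 1 : MvPolynomial (Fin 2) K) ^ m).IsHomogeneous m := by
  simpa using ((MvPolynomial.isHomogeneous_X K 0).add (MvPolynomial.isHomogeneous_X K 1)).pow m

variable (K) in
noncomputable def powSyzygyMap (m : ℕ) : K[X] × K[X] × K[X] →ₗ[K] K[X] where
  toFun P := X ^ m * P.1 + P.2.1 + (X + 1) ^ m * P.2.2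
  map_add' P Q := by
    simp only [Prod.fst_add, Prod.snd_add]
    ring
  map_smul' c P := by
    simp only [Prod.smul_fst, Prod.smul_snd, smul_eq_C_mul, RingHom.id_apply]
    ring

variable (K) in
/-- The syzygies `u ^ m a + v ^ m b + (u + v) ^ m c = 0` by forms of degree `n - 1`, dehomogenized
at `u = X`, `v = 1`. -/
noncomputable def powSyzygies (m n : ℕ) : Submodule K (K[X] × K[X] × K[X]) :=
  LinearMap.ker (powSyzygyMap K m) ⊓ (K[X]_n).prod ((K[X]_n).prod (K[X]_n))

lemma mem_powSyzygies {m n : ℕ} {P : K[X] × K[X] × K[X]} :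
    P ∈ powSyzygies K m n ↔ X ^ m * P.1 + P.2.1 + (X + 1) ^ m * P.2.2 = 0 ∧
      P.1 ∈ K[X]_n ∧ P.2.1 ∈ K[X]_n ∧ P.2.2 ∈ K[X]_n := by
  simp [powSyzygies, powSyzygyMap, Submodule.mem_prod]

lemma powSyzygyMap_mem_degreeLT (m : ℕ) {n : ℕ} {P : K[X] × K[X] × K[X]}
    (h : P.1 ∈ K[X]_n ∧ P.2.1 ∈ K[X]_n ∧ P.2.2 ∈ K[X]_n) :
    powSyzygyMap K m P ∈ K[X]_(m + n) :=
  add_mem (add_mem (mul_mem_degreeLT (X_pow_mem_degreeLT m) h.1)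
    (degreeLT_mono (Nat.le_add_left n m) h.2.1))
    (mul_mem_degreeLT (X_add_one_pow_mem_degreeLT m) h.2.2)

theorem le_finrank_powSyzygies (m n : ℕ) :
    3 * n ≤ Module.finrank K (powSyzygies K m n) + (m + n) := by
  let ι := (K[X]_n).subtype.prodMap ((K[X]_n).subtype.prodMap (K[X]_n).subtype)
  let f := powSyzygyMap K m ∘ₗ ι
  have hι : Function.Injective ι := by
    simp only [ι, LinearMap.coe_prodMap, Submodule.coe_subtype]
    exact Prod.map_injective.mpr ⟨Subtype.val_injective,
      Prod.map_injective.mpr ⟨Subtype.val_injective, Subtype.val_injective⟩⟩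
  have hmap : (LinearMap.ker f).map ι = powSyzygies K m n := by
    ext P
    rw [Submodule.mem_map, mem_powSyzygies]
    constructor
    · rintro ⟨Q, hQ, rfl⟩
      exact ⟨hQ, Q.1.2, Q.2.1.2, Q.2.2.2⟩
    · rintro ⟨hP, h1, h2, h3⟩
      exact ⟨(⟨P.1, h1⟩, ⟨P.2.1, h2⟩, ⟨P.2.2, h3⟩), hP, rfl⟩
  have hker : Module.finrank K (powSyzygies K m n) = Module.finrank K (LinearMap.ker f) := by
    rw [← hmap]
    exact (Submodule.equivMapOfInjective ι hι _).finrank_eq.symm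
  have hrange : Module.finrank K (LinearMap.range f) ≤ m + n := by
    calc _ ≤ Module.finrank K (K[X]_(m + n)) := by
          refine Submodule.finrank_mono ?_
          rintro _ ⟨P, rfl⟩
          exact powSyzygyMap_mem_degreeLT m ⟨P.1.2, P.2.1.2, P.2.2.2⟩
      _ = m + n := (degreeLTEquiv K _).finrank_eq.trans (Module.finrank_fin_fun K)
  have hdom : Module.finrank K (K[X]_n × K[X]_n × K[X]_n) = 3 * n := by
    simp only [Module.finrank_prod, (degreeLTEquiv K n).finrank_eq, Module.finrank_fin_fun]
    ring
  have := f.finrank_range_add_finrank_ker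
  omega

lemma wronskian_eq_zero_of_mem_powSyzygies {m n : ℕ} (h : 2 * n ≤ m) {P : K[X] × K[X] × K[X]}
    (hP : P ∈ powSyzygies K m n) : wronskian (X ^ m * P.1) P.2.1 = 0 := by
  obtain ⟨heq, ha, hb, -⟩ := mem_powSyzygies.mp hP
  by_contra hW
  have ha0 : P.1 ≠ 0 := fun h0 => hW (by simp [h0])
  have hb0 : P.2.1 ≠ 0 := fun h0 => hW (by simp [h0])
  have hlt := natDegree_wronskian_lt_add hW
  rw [natDegree_mul (pow_ne_zero _ X_ne_zero) ha0, natDegree_X_pow] at hlt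
  -- With `f = X ^ m a` and `h = (X + 1) ^ m c`: `W(f, b) = W(h, f)` as `f + b + h = 0`, and
  -- `f`, `h` vanish to order `m` at `0`, `-1`.
  have hdvd : X ^ (m - 1) * (X + 1) ^ (m - 1) ∣ wronskian (X ^ m * P.1) P.2.1 := by
    have hcyc : P.2.1 + (X + 1) ^ m * P.2.2 + X ^ m * P.1 = 0 := by linear_combination heq
    rw [wronskian_eq_of_sum_zero heq, wronskian_eq_of_sum_zero hcyc, wronskian]
    have hf : X ^ (m - 1) ∣ X ^ m * P.1 := (pow_dvd_pow _ (m.sub_le 1)).mul_right _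
    have hh : (X + 1) ^ (m - 1) ∣ (X + 1) ^ m * P.2.2 := (pow_dvd_pow _ (m.sub_le 1)).mul_right _
    have hf' : X ^ (m - 1) ∣ derivative (X ^ m * P.1) :=
      pow_sub_one_dvd_derivative_of_pow_dvd (dvd_mul_right _ _)
    have hh' : (X + 1) ^ (m - 1) ∣ derivative ((X + 1) ^ m * P.2.2) :=
      pow_sub_one_dvd_derivative_of_pow_dvd (dvd_mul_right _ _)
    rw [mul_comm (X ^ (m - 1))]
    exact dvd_sub (mul_dvd_mul hh hf') (mul_dvd_mul hh' hf)
  have hdeg := natDegree_le_of_dvd hdvd hW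
  rw [← map_one C, natDegree_mul (pow_ne_zero _ X_ne_zero) (pow_ne_zero _ (X_add_C_ne_zero 1)),
    natDegree_X_pow, natDegree_pow_X_add_C] at hdeg
  have := natDegree_lt_of_mem_degreeLT ha0 ha
  have := natDegree_lt_of_mem_degreeLT hb0 hb
  omega

theorem powSyzygies_eq_bot [CharZero K] {m n : ℕ} (h : 2 * n ≤ m) : powSyzygies K m n = ⊥ := by
  refine (Submodule.eq_bot_iff _).mpr fun P hP => ?_
  obtain ⟨heq, ha, hb, hc⟩ := mem_powSyzygies.mp hP
  have hXm : (X : K[X]) ^ m ∉ K[X]_n := X_pow_notMem_degreeLT (by omega)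
  have hX1m : (X + 1 : K[X]) ^ m ∉ K[X]_n := X_add_one_pow_notMem_degreeLT (by omega)
  have hb0 : P.2.1 = 0 := by
    by_contra hb0
    obtain ⟨e, he⟩ :=
      exists_eq_C_mul_of_wronskian_eq_zero hb0 (wronskian_eq_zero_of_mem_powSyzygies h hP)
    rcases eq_or_ne e 0 with rfl | he0
    · rw [map_zero, zero_mul] at he
      exact hb0 (eq_zero_of_dvd_of_mem_degreeLT ⟨-P.2.2, by linear_combination heq - he⟩ hb hX1m)
    · have hCe : C e⁻¹ * C e = 1 := by rw [← map_mul, inv_mul_cancel₀ he0, map_one]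
      exact hb0 (eq_zero_of_dvd_of_mem_degreeLT
        ⟨C e⁻¹ * P.1, by linear_combination (-C e⁻¹) * he - P.2.1 * hCe⟩ hb hXm)
  have hc0 : P.2.2 = 0 := by
    have hcop : IsCoprime ((X : K[X]) ^ m) ((X + 1) ^ m) :=
      (show IsCoprime (X : K[X]) (X + 1) from ⟨-1, 1, by ring⟩).pow
    exact eq_zero_of_dvd_of_mem_degreeLT
      (hcop.dvd_of_dvd_mul_left ⟨-P.1, by linear_combination heq - hb0⟩) hc hXm
  have ha0 : P.1 = 0 := by simpa [hb0, hc0, X_ne_zero] using heq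
  ext <;> simp [ha0, hb0, hc0]

lemma isCoprime_of_mem_powSyzygies {m n : ℕ} {P : K[X] × K[X] × K[X]}
    (hP : P ∈ powSyzygies K m n) (hP0 : P ≠ 0) (hmin : powSyzygies K m (n - 1) = ⊥) :
    IsCoprime P.1 P.2.2 := by
  obtain ⟨heq, ha, hb, hc⟩ := mem_powSyzygies.mp hP
  refine isCoprime_of_prime_dvd (fun ⟨ha0, hc0⟩ => hP0 ?_) fun p hp ⟨a, ha'⟩ ⟨c, hc'⟩ => hP0 ?_
  · have hb0 : P.2.1 = 0 := by simpa [ha0, hc0] using heq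
    ext <;> simp [ha0, hb0, hc0]
  obtain ⟨b, hb'⟩ : p ∣ P.2.1 := ⟨-(X ^ m * a) - (X + 1) ^ m * c, by
    rw [ha', hc'] at heq
    linear_combination heq⟩
  have hp1 : p ∉ K[X]_1 := notMem_degreeLT_of_le_natDegree hp.ne_zero
    (natDegree_pos_iff_degree_pos.mpr (degree_pos_of_irreducible hp.irreducible))
  have hquot : (a, b, c) ∈ powSyzygies K m (n - 1) := by
    refine mem_powSyzygies.mpr ⟨?_, mem_degreeLT_sub_of_mul_mem (ha' ▸ ha) hp1,
      mem_degreeLT_sub_of_mul_mem (hb' ▸ hb) hp1, mem_degreeLT_sub_of_mul_mem (hc' ▸ hc) hp1⟩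
    rw [ha', hb', hc'] at heq
    refine (mul_eq_zero.mp ?_).resolve_left hp.ne_zero
    linear_combination heq
  rw [hmin, Submodule.mem_bot, Prod.mk_eq_zero, Prod.mk_eq_zero] at hquot
  ext <;> simp [ha', hb', hc', hquot]

lemma cross_eq_of_powSyzygy {m : ℕ} {P Q : K[X] × K[X] × K[X]}
    (hP : X ^ m * P.1 + P.2.1 + (X + 1) ^ m * P.2.2 = 0)
    (hQ : X ^ m * Q.1 + Q.2.1 + (X + 1) ^ m * Q.2.2 = 0) :
    P.1 * Q.2.1 - Q.1 * P.2.1 = (X + 1) ^ m * (Q.1 * P.2.2 - P.1 * Q.2.2) := by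
  linear_combination P.1 * hQ - Q.1 * hP

lemma exists_eq_smul_of_cross_eq_zero {m : ℕ} {P Q : K[X] × K[X] × K[X]}
    (hP : X ^ m * P.1 + P.2.1 + (X + 1) ^ m * P.2.2 = 0)
    (hQ : X ^ m * Q.1 + Q.2.1 + (X + 1) ^ m * Q.2.2 = 0) (hcop : IsCoprime P.1 P.2.2)
    (h : Q.1 * P.2.2 = P.1 * Q.2.2) : ∃ l : K[X], Q = l • P := by
  obtain ⟨α, γ, hαγ⟩ := hcop
  have h1 : Q.1 = (α * Q.1 + γ * Q.2.2) * P.1 := by linear_combination (-Q.1) * hαγ + γ * h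
  have h3 : Q.2.2 = (α * Q.1 + γ * Q.2.2) * P.2.2 := by
    linear_combination (-Q.2.2) * hαγ - α * h
  refine ⟨α * Q.1 + γ * Q.2.2, Prod.ext h1 (Prod.ext ?_ h3)⟩
  simp only [Prod.smul_fst, Prod.smul_snd, smul_eq_mul]
  linear_combination hQ - (α * Q.1 + γ * Q.2.2) * hP - X ^ m * h1 - (X + 1) ^ m * h3

lemma mem_degreeLT_of_smul_mem_powSyzygies {m n k : ℕ} {P : K[X] × K[X] × K[X]} {l : K[X]}
    (hP : P ∈ powSyzygies K m (k + 1)) (hP0 : P ≠ 0) (hmin : powSyzygies K m k = ⊥)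
    (hl : l • P ∈ powSyzygies K m n) : l ∈ K[X]_(n - k) := by
  obtain ⟨heq, -⟩ := mem_powSyzygies.mp hP
  obtain ⟨-, ha, hb, hc⟩ := mem_powSyzygies.mp hl
  have hlarge : ¬(P.1 ∈ K[X]_k ∧ P.2.1 ∈ K[X]_k ∧ P.2.2 ∈ K[X]_k) := fun hsmall =>
    hP0 ((Submodule.mem_bot K).mp (hmin ▸ mem_powSyzygies.mpr ⟨heq, hsmall⟩))
  simp only [not_and_or] at hlarge
  rcases hlarge with h | h | h
  · exact mem_degreeLT_sub_of_mul_mem (mul_comm l P.1 ▸ ha) h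
  · exact mem_degreeLT_sub_of_mul_mem (mul_comm l P.2.1 ▸ hb) h
  · exact mem_degreeLT_sub_of_mul_mem (mul_comm l P.2.2 ▸ hc) h

theorem exists_powSyzygy_pair [CharZero K] (m : ℕ) :
    ∃ P Q : K[X] × K[X] × K[X], P ∈ powSyzygies K m (m / 2 + 1) ∧
      Q ∈ powSyzygies K m (m - m / 2 + 1) ∧ P.1 * Q.2.1 - Q.1 * P.2.1 = (X + 1) ^ m := by
  set k₁ := m / 2
  set k₂ := m - m / 2
  have hmin : powSyzygies K m k₁ = ⊥ := powSyzygies_eq_bot (by omega)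
  obtain ⟨P, hP, hP0⟩ : ∃ P ∈ powSyzygies K m (k₁ + 1), P ≠ 0 := by
    refine Submodule.exists_mem_ne_zero_of_ne_bot fun hbot => ?_
    have := le_finrank_powSyzygies (K := K) m (k₁ + 1)
    rw [hbot, finrank_bot] at this
    omega
  have hcop := isCoprime_of_mem_powSyzygies hP hP0 hmin
  let multiples :=
    (K[X]_(k₂ + 1 - k₁)).map ((LinearMap.toSpanSingleton K[X] _ P).restrictScalars K)
  obtain ⟨Q, hQ, hQP⟩ : ∃ Q ∈ powSyzygies K m (k₂ + 1), Q ∉ multiples := by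
    by_contra! hle
    have h1 := Submodule.finrank_mono hle
    have h2 : Module.finrank K multiples ≤ k₂ + 1 - k₁ :=
      (Submodule.finrank_map_le _ _).trans_eq
        ((degreeLTEquiv K _).finrank_eq.trans (Module.finrank_fin_fun K))
    have h3 := le_finrank_powSyzygies (K := K) m (k₂ + 1)
    omega
  obtain ⟨heqP, haP, hbP, -⟩ := mem_powSyzygies.mp hP
  obtain ⟨heqQ, haQ, hbQ, -⟩ := mem_powSyzygies.mp hQ
  have hcross := cross_eq_of_powSyzygy heqP heqQ
  obtain ⟨e, he⟩ : ∃ e : K, Q.1 * P.2.2 - P.1 * Q.2.2 = C e := by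
    have hdeg : (X + 1) ^ m * (Q.1 * P.2.2 - P.1 * Q.2.2) ∈ K[X]_(m + 1) := by
      have hk : k₁ + (k₂ + 1) = m + 1 := by omega
      rw [← hcross, ← hk, mul_comm Q.1]
      exact sub_mem (mul_mem_degreeLT haP hbQ) (mul_mem_degreeLT hbP haQ)
    have := mem_degreeLT_sub_of_mul_mem hdeg (X_add_one_pow_notMem_degreeLT le_rfl)
    rw [Nat.add_sub_cancel_left] at this
    exact ⟨_, eq_C_of_natDegree_le_zero (mem_degreeLT_succ_iff.mp this)⟩
  have he0 : e ≠ 0 := by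
    rintro rfl
    obtain ⟨l, rfl⟩ := exists_eq_smul_of_cross_eq_zero heqP heqQ hcop
      (by rwa [map_zero, sub_eq_zero] at he)
    exact hQP (Submodule.mem_map_of_mem (mem_degreeLT_of_smul_mem_powSyzygies hP hP0 hmin hQ))
  have hCe : C e⁻¹ * C e = 1 := by rw [← map_mul, inv_mul_cancel₀ he0, map_one]
  refine ⟨e⁻¹ • P, Q, Submodule.smul_mem _ _ hP, hQ, ?_⟩
  simp only [Prod.smul_fst, Prod.smul_snd, smul_eq_C_mul]
  linear_combination C e⁻¹ * hcross + C e⁻¹ * (X + 1) ^ m * he + (X + 1) ^ m * hCe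

lemma homogenize_powSyzygy {m k : ℕ} {P : K[X] × K[X] × K[X]}
    (hP : P ∈ powSyzygies K m (k + 1)) :
    MvPolynomial.X 0 ^ m * P.1.homogenize k + MvPolynomial.X 1 ^ m * P.2.1.homogenize k +
      (MvPolynomial.X 0 + MvPolynomial.X 1) ^ m * P.2.2.homogenize k = 0 := by
  obtain ⟨heq, ha, hb, hc⟩ := mem_powSyzygies.mp hP
  rw [mem_degreeLT_succ_iff] at ha hb hc
  refine eq_of_isHomogeneous_of_aeval_eq (n := m + k) ?_ (MvPolynomial.isHomogeneous_zero _ _ _) ?_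
  · exact (((MvPolynomial.isHomogeneous_X_pow 0 m).mul (isHomogeneous_homogenize _)).add
      ((MvPolynomial.isHomogeneous_X_pow 1 m).mul (isHomogeneous_homogenize _))).add
      ((isHomogeneous_X_add_X_pow m).mul (isHomogeneous_homogenize _))
  · simpa [ha, hb, hc] using heq

lemma homogenize_cross {m k₁ k₂ : ℕ} (hk : k₁ + k₂ = m) {P Q : K[X] × K[X] × K[X]}
    (hP₁ : P.1.natDegree ≤ k₁) (hP₂ : P.2.1.natDegree ≤ k₁) (hQ₁ : Q.1.natDegree ≤ k₂)
    (hQ₂ : Q.2.1.natDegree ≤ k₂) (h : P.1 * Q.2.1 - Q.1 * P.2.1 = (X + 1) ^ m) :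
    P.1.homogenize k₁ * Q.2.1.homogenize k₂ - Q.1.homogenize k₂ * P.2.1.homogenize k₁ =
      (MvPolynomial.X 0 + MvPolynomial.X 1) ^ m := by
  refine eq_of_isHomogeneous_of_aeval_eq (n := m) ?_ (isHomogeneous_X_add_X_pow m) ?_
  · rw [← hk]
    refine ((isHomogeneous_homogenize _).mul (isHomogeneous_homogenize _)).sub ?_
    rw [add_comm]
    exact (isHomogeneous_homogenize _).mul (isHomogeneous_homogenize _)
  · simpa [hP₁, hP₂, hQ₁, hQ₂] using h

end Polynomial

section LogPair

variable {R : Type*} [CommRing R]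

/-- The conditions on the values `x = (θ α, θ β)` of a derivation `θ` with `a ∣ θ α`, `b ∣ θ β`
and `c ∣ θ (α + β)`; for `D(A₂, m)`, `α = x₀ - x₁`, `β = x₁ - x₂` and `a, b, c` are the `m`-th
powers of `α, β, α + β`. -/
def IsLogPair (a b c : R) (x : R × R) : Prop := a ∣ x.1 ∧ b ∣ x.2 ∧ c ∣ x.1 + x.2

variable [DecompositionMonoid R] {a b c : R}

lemma IsLogPair.mul_dvd_det (hab : IsRelPrime a b) (hac : IsRelPrime a c) (hbc : IsRelPrime b c)
    {x y : R × R} (hx : IsLogPair a b c x) (hy : IsLogPair a b c y) :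
    a * b * c ∣ x.1 * y.2 - y.1 * x.2 := by
  have ha : a ∣ x.1 * y.2 - y.1 * x.2 := dvd_sub (hx.1.mul_right _) (hy.1.mul_right _)
  have hb : b ∣ x.1 * y.2 - y.1 * x.2 := dvd_sub (hy.2.1.mul_left _) (hx.2.1.mul_left _)
  have hc : c ∣ x.1 * y.2 - y.1 * x.2 := by
    rw [show x.1 * y.2 - y.1 * x.2 = x.1 * (y.1 + y.2) - y.1 * (x.1 + x.2) by ring]
    exact dvd_sub (hy.2.2.mul_left _) (hx.2.2.mul_left _)
  exact (hac.mul_left hbc).mul_dvd (hab.mul_dvd ha hb) hc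

theorem IsLogPair.existsUnique_eq_smul_add_smul [IsDomain R] (hab : IsRelPrime a b)
    (hac : IsRelPrime a c) (hbc : IsRelPrime b c) {x y z : R × R} (hx : IsLogPair a b c x)
    (hy : IsLogPair a b c y) (hdet : x.1 * y.2 - y.1 * x.2 = a * b * c) (h0 : a * b * c ≠ 0)
    (hz : IsLogPair a b c z) : ∃! r : R × R, z = r.1 • x + r.2 • y := by
  obtain ⟨s, hs⟩ := hz.mul_dvd_det hab hac hbc hy
  obtain ⟨t, ht⟩ := hx.mul_dvd_det hab hac hbc hz
  refine ⟨(s, t), Prod.ext (mul_left_cancel₀ h0 ?_) (mul_left_cancel₀ h0 ?_), fun r hr => ?_⟩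
  · simp only [Prod.fst_add, Prod.smul_fst, smul_eq_mul]
    linear_combination x.1 * hs + y.1 * ht - z.1 * hdet
  · simp only [Prod.snd_add, Prod.smul_snd, smul_eq_mul]
    linear_combination x.2 * hs + y.2 * ht - z.2 * hdet
  replace hr : z = r.1 • x + r.2 • y := hr
  simp only [Prod.ext_iff, Prod.fst_add, Prod.snd_add, Prod.smul_fst, Prod.smul_snd,
    smul_eq_mul] at hr
  refine Prod.ext (mul_left_cancel₀ h0 ?_) (mul_left_cancel₀ h0 ?_)
  · linear_combination y.1 * hr.2 - y.2 * hr.1 + hs - r.1 * hdet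
  · linear_combination x.2 * hr.1 - x.1 * hr.2 + ht - r.2 * hdet

end LogPair

namespace MvPolynomial

variable {σ R : Type*} [CommRing R] [IsDomain R]

lemma irreducible_X_sub_X {i j : σ} (hij : i ≠ j) : Irreducible (X i - X j : MvPolynomial σ R) := by
  classical
  refine irreducible_of_totalDegree_eq_one ?_ fun r hr => ?_
  · exact ((isHomogeneous_X R i).sub (isHomogeneous_X R j)).totalDegree
      (sub_ne_zero.mpr ((X_injective (σ := σ) (R := R)).ne hij))
  · have := hr (Finsupp.single i 1)
    simp only [coeff_sub, coeff_X, ↓reduceIte, Finsupp.single_left_inj one_ne_zero, Ne.symm hij,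
      sub_zero] at this
    exact isUnit_of_dvd_one this

lemma isRelPrime_X_sub_X_pow [DecompositionMonoid (MvPolynomial σ R)] {i j k l : σ} (hij : i ≠ j)
    (x : σ → R) (hx : x i = x j) (hkl : x k ≠ x l) (m n : ℕ) :
    IsRelPrime ((X i - X j : MvPolynomial σ R) ^ m) ((X k - X l) ^ n) := by
  refine ((irreducible_X_sub_X hij).isRelPrime_iff_not_dvd.mpr fun h => hkl ?_).pow_left.pow_right
  have := map_dvd (eval x) h
  rwa [map_sub, map_sub, eval_X, eval_X, eval_X, eval_X, hx, sub_self, zero_dvd_iff,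
    sub_eq_zero] at this

end MvPolynomial

section BraidA2

variable {K : Type} [Field K]

lemma braidD_three_iff {m : ℕ} {f : Fin 3 → MvPolynomial (Fin 3) K} :
    braidD K 3 m f ↔ IsLogPair ((X 0 - X 1) ^ m) ((X 1 - X 2) ^ m) ((X 0 - X 2) ^ m)
      (f 0 - f 1, f 1 - f 2) := by
  simp only [IsLogPair, sub_add_sub_cancel]
  constructor
  · intro h
    exact ⟨h 0 1 (by decide), h 1 2 (by decide), h 0 2 (by decide)⟩
  · rintro ⟨h01, h12, h02⟩ i j hij
    fin_cases i <;> fin_cases j <;> first | exact absurd hij (by decide) | assumption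

theorem isBasisOf_braidD_three {m : ℕ} {θ₁ θ₂ : Fin 3 → MvPolynomial (Fin 3) K}
    (h₁ : braidD K 3 m θ₁) (h₂ : braidD K 3 m θ₂)
    (hdet : (θ₁ 0 - θ₁ 1) * (θ₂ 1 - θ₂ 2) - (θ₂ 0 - θ₂ 1) * (θ₁ 1 - θ₁ 2) =
      (X 0 - X 1) ^ m * (X 1 - X 2) ^ m * (X 0 - X 2) ^ m) :
    isBasisOf (braidD K 3 m) ![fun _ => 1, θ₁, θ₂] := by
  -- the points witness that no two of the forms `x₀ - x₁`, `x₁ - x₂`, `x₀ - x₂` are associated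
  have hab := isRelPrime_X_sub_X_pow (R := K) (i := 0) (j := 1) (k := 1) (l := 2) (by decide)
    ![0, 0, 1] rfl (by simp) m m
  have hac := isRelPrime_X_sub_X_pow (R := K) (i := 0) (j := 1) (k := 0) (l := 2) (by decide)
    ![0, 0, 1] rfl (by simp) m m
  have hbc := isRelPrime_X_sub_X_pow (R := K) (i := 1) (j := 2) (k := 0) (l := 2) (by decide)
    ![1, 0, 0] rfl (by simp) m m
  have h0 : (X 0 - X 1) ^ m * (X 1 - X 2) ^ m * (X 0 - X 2) ^ m ≠
      (0 : MvPolynomial (Fin 3) K) := by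
    simp [sub_eq_zero, X_injective.eq_iff]
  refine ⟨?_, fun g hg => ?_⟩
  · intro j
    fin_cases j
    · intro i j _
      simp
    · exact h₁
    · exact h₂
  obtain ⟨r, hr, huniq⟩ := IsLogPair.existsUnique_eq_smul_add_smul hab hac hbc
    (braidD_three_iff.mp h₁) (braidD_three_iff.mp h₂) hdet h0 (braidD_three_iff.mp hg)
  simp only [Prod.ext_iff, Prod.fst_add, Prod.snd_add, Prod.smul_fst, Prod.smul_snd,
    smul_eq_mul] at hr
  have hsum : ∀ (c : Fin 3 → MvPolynomial (Fin 3) K) i,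
      (∑ j, c j • ![fun _ => 1, θ₁, θ₂] j) i = c 0 + c 1 * θ₁ i + c 2 * θ₂ i := by
    simp [Fin.sum_univ_three]
  refine ⟨![g 1 - r.1 * θ₁ 1 - r.2 * θ₂ 1, r.1, r.2], ?_, fun c hc => ?_⟩
  · funext i
    rw [hsum]
    fin_cases i
    · show g 0 = g 1 - r.1 * θ₁ 1 - r.2 * θ₂ 1 + r.1 * θ₁ 0 + r.2 * θ₂ 0
      linear_combination hr.1
    · show g 1 = g 1 - r.1 * θ₁ 1 - r.2 * θ₂ 1 + r.1 * θ₁ 1 + r.2 * θ₂ 1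
      ring
    · show g 2 = g 1 - r.1 * θ₁ 1 - r.2 * θ₂ 1 + r.1 * θ₁ 2 + r.2 * θ₂ 2
      linear_combination -hr.2
  have hc' i : g i = c 0 + c 1 * θ₁ i + c 2 * θ₂ i := by rw [hc, hsum]
  obtain rfl : (c 1, c 2) = r := huniq _ <| Prod.ext
    (show g 0 - g 1 = c 1 * (θ₁ 0 - θ₁ 1) + c 2 * (θ₂ 0 - θ₂ 1) by
      linear_combination hc' 0 - hc' 1)
    (show g 1 - g 2 = c 1 * (θ₁ 1 - θ₁ 2) + c 2 * (θ₂ 1 - θ₂ 2) by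
      linear_combination hc' 1 - hc' 2)
  funext i
  fin_cases i
  · show c 0 = g 1 - c 1 * θ₁ 1 - c 2 * θ₂ 1
    linear_combination -hc' 1
  · rfl
  · rfl

variable (K) in
noncomputable def braidForms : MvPolynomial (Fin 2) K →ₐ[K] MvPolynomial (Fin 3) K :=
  aeval ![X 0 - X 1, X 1 - X 2]

@[simp]
lemma braidForms_X_zero : braidForms K (X 0) = X 0 - X 1 := aeval_X _ _

@[simp]
lemma braidForms_X_one : braidForms K (X 1) = X 1 - X 2 := aeval_X _ _

lemma _root_.MvPolynomial.IsHomogeneous.braidForms {p : MvPolynomial (Fin 2) K} {n : ℕ}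
    (hp : p.IsHomogeneous n) : (braidForms K p).IsHomogeneous n := by
  have hg : ∀ i, (![X 0 - X 1, X 1 - X 2] i : MvPolynomial (Fin 3) K).IsHomogeneous 1 := by
    intro i
    fin_cases i
    · exact (isHomogeneous_X K 0).sub (isHomogeneous_X K 1)
    · exact (isHomogeneous_X K 1).sub (isHomogeneous_X K 2)
  have h := hp.aeval _ hg
  rw [one_mul] at h
  exact h

variable (K) in
/-- `θ(x₀ - x₁) = u ^ m a` and `θ(x₁ - x₂) = v ^ m b`, with `a`, `b` the first two entries of `P`
homogenized to degree `k` in `u = x₀ - x₁`, `v = x₁ - x₂`. -/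
noncomputable def syzygyDerivation (m k : ℕ) (P : K[X] × K[X] × K[X]) :
    Fin 3 → MvPolynomial (Fin 3) K :=
  ![(X 0 - X 1) ^ m * braidForms K (P.1.homogenize k), 0,
    -((X 1 - X 2) ^ m * braidForms K (P.2.1.homogenize k))]

lemma braidD_syzygyDerivation {m k : ℕ} {P : K[X] × K[X] × K[X]}
    (hP : P ∈ Polynomial.powSyzygies K m (k + 1)) :
    braidD K 3 m (syzygyDerivation K m k P) := by
  have h := congrArg (braidForms K) (Polynomial.homogenize_powSyzygy hP)
  simp only [map_add, map_mul, map_pow, map_zero, braidForms_X_zero, braidForms_X_one] at h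
  refine braidD_three_iff.mpr ⟨⟨braidForms K (P.1.homogenize k), ?_⟩,
    ⟨braidForms K (P.2.1.homogenize k), ?_⟩, ⟨-braidForms K (P.2.2.homogenize k), ?_⟩⟩ <;>
    simp only [syzygyDerivation, Matrix.cons_val_zero, Matrix.cons_val_one, Matrix.cons_val_two,
      Matrix.head_cons, Matrix.tail_cons]
  · ring
  · ring
  · linear_combination h

lemma homogOf_syzygyDerivation (m k : ℕ) (P : K[X] × K[X] × K[X]) :
    homogOf (syzygyDerivation K m k P) (m + k) := by
  have hu := ((isHomogeneous_X K (0 : Fin 3)).sub (isHomogeneous_X K 1)).pow m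
  have hv := ((isHomogeneous_X K (1 : Fin 3)).sub (isHomogeneous_X K 2)).pow m
  rw [one_mul] at hu hv
  have ha := hu.mul (Polynomial.isHomogeneous_homogenize (n := k) P.1).braidForms
  have hb := (hv.mul (Polynomial.isHomogeneous_homogenize (n := k) P.2.1).braidForms).neg
  intro i
  fin_cases i
  exacts [Or.inr ha, Or.inl rfl, Or.inr hb]

lemma det_syzygyDerivation {m k₁ k₂ : ℕ} (hk : k₁ + k₂ = m) {P Q : K[X] × K[X] × K[X]}
    (hP : P ∈ Polynomial.powSyzygies K m (k₁ + 1)) (hQ : Q ∈ Polynomial.powSyzygies K m (k₂ + 1))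
    (hPQ : P.1 * Q.2.1 - Q.1 * P.2.1 = (Polynomial.X + 1) ^ m) :
    let θ₁ := syzygyDerivation K m k₁ P
    let θ₂ := syzygyDerivation K m k₂ Q
    (θ₁ 0 - θ₁ 1) * (θ₂ 1 - θ₂ 2) - (θ₂ 0 - θ₂ 1) * (θ₁ 1 - θ₁ 2) =
      (X 0 - X 1) ^ m * (X 1 - X 2) ^ m * (X 0 - X 2) ^ m := by
  obtain ⟨-, hP₁, hP₂, -⟩ := Polynomial.mem_powSyzygies.mp hP
  obtain ⟨-, hQ₁, hQ₂, -⟩ := Polynomial.mem_powSyzygies.mp hQ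
  rw [Polynomial.mem_degreeLT_succ_iff] at hP₁ hP₂ hQ₁ hQ₂
  have h := congrArg (braidForms K) (Polynomial.homogenize_cross hk hP₁ hP₂ hQ₁ hQ₂ hPQ)
  simp only [map_sub, map_mul, map_pow, map_add, braidForms_X_zero, braidForms_X_one,
    sub_add_sub_cancel] at h
  simp only [syzygyDerivation, Matrix.cons_val_zero, Matrix.cons_val_one, Matrix.cons_val_two,
    Matrix.head_cons, Matrix.tail_cons]
  linear_combination (X 0 - X 1) ^ m * (X 1 - X 2) ^ m * h

end BraidA2

/-- For the braid arrangement `A₂` in `K³` with constant multiplicity `m`, `D(A₂, m)` is free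
with exponents `{0, 3m/2, 3m/2}` for `m` even and `{0, (3m-1)/2, (3m+1)/2}` for `m` odd
(the exponent 0 corresponding to the invariant direction `∂₁+∂₂+∂₃`). -/
theorem stmt5 {K : Type} [Field K] [CharZero K] (m : ℕ) :
    (Even m → ∃ θ : Fin 3 → Fin 3 → MvPolynomial (Fin 3) K,
        isBasisOf (braidD K 3 m) θ ∧
        homogOf (θ 0) 0 ∧ homogOf (θ 1) (3 * m / 2) ∧ homogOf (θ 2) (3 * m / 2)) ∧
    (Odd m → ∃ θ : Fin 3 → Fin 3 → MvPolynomial (Fin 3) K,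
        isBasisOf (braidD K 3 m) θ ∧
        homogOf (θ 0) 0 ∧ homogOf (θ 1) ((3 * m - 1) / 2) ∧
        homogOf (θ 2) ((3 * m + 1) / 2)) := by
  obtain ⟨P, Q, hP, hQ, hPQ⟩ := Polynomial.exists_powSyzygy_pair (K := K) m
  have hbasis := isBasisOf_braidD_three (braidD_syzygyDerivation hP) (braidD_syzygyDerivation hQ)
    (det_syzygyDerivation (by omega) hP hQ hPQ)
  have hθ₀ : homogOf (fun _ : Fin 3 => (1 : MvPolynomial (Fin 3) K)) 0 :=
    fun _ => Or.inr (isHomogeneous_one _ _)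
  have hθ₁ := homogOf_syzygyDerivation m (m / 2) P
  have hθ₂ := homogOf_syzygyDerivation m (m - m / 2) Q
  refine ⟨fun ⟨r, hr⟩ => ⟨_, hbasis, hθ₀, ?_, ?_⟩, fun ⟨r, hr⟩ => ⟨_, hbasis, hθ₀, ?_, ?_⟩⟩
  · rwa [show 3 * m / 2 = m + m / 2 by omega]
  · rwa [show 3 * m / 2 = m + (m - m / 2) by omega]
  · rwa [show (3 * m - 1) / 2 = m + m / 2 by omega]
  · rwa [show (3 * m + 1) / 2 = m + (m - m / 2) by omega]
end

section
/- Mixed multiplicity freeness for type A (Corollary): for m, q ≥ 1, the multiarrangement on the type A_{ℓ-1} Coxeter arrangement with defining polynomial Q = Π_{2 ≤ j ≤ ℓ}(x_1 - x_j)^{m+q} · Π_{2 ≤ i < j ≤ ℓ}(x_i - x_j)^m is free, with exponents {mℓ/2 + q, ..., mℓ/2 + q} (ℓ-1 copies) when m is even, and {(m-1)ℓ/2 + 1 + q, (m-1)ℓ/2 + 2 + q, ..., (m-1)ℓ/2 + ℓ - 1 + q} when m is odd. -/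
/-!
Write `ℓ = n + 1` and the coordinates as `x₀, …, xₙ`. For a polynomial `G(t)` over
`S = K[x₀, …, xₙ]` the vector `θ_G = (∫_{x₀}^{x_j} G(t) dt)_j` satisfies
`(x_i - x_j)^(p + r + 1) ∣ θ_G(i) - θ_G(j)` as soon as `(t - x_j)^p (t - x_i)^r ∣ G`
(substitute `t = x_j + (x_i - x_j) s`). With `H = (t - x₀)^a ∏_{s ≥ 1} (t - x_s)^b` we take
`G_k = H t^k` when `m = 2b + 1`, `a = b + q`, and `G_k = H ∏_{s ≥ 1, s ≠ k+1} (t - x_s)` when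
`m = 2b + 2`, `a = b + 1 + q`. Together with the constant vector `1` these give `ℓ` homogeneous
elements of `D(A, ν)` whose degrees add up to `deg Q`.

Saito's criterion then needs the determinant to be nonzero. A relation `∑ v_k θ_{G_k} = 0`
means that `P = ∑ v_k ∫_{x₀}^t G_k` vanishes at every `x_j` while `P'` vanishes there to order
`a` resp. `b`; counting roots, `P = 0`, so `∑ v_k G_k = 0`, which forces `v = 0` since the
`t^k` resp. the Lagrange-type products are linearly independent. Since `Q` divides the
determinant (row operations) and both are homogeneous of the same degree, the determinant is a
nonzero constant multiple of `Q`, and Cramer's rule expresses every element of `D(A, ν)` in the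
basis.
-/

open MvPolynomial

/-- `D(A; m, q)` for the mixed multiplicity on the type `A_{ℓ-1}` Coxeter arrangement:
multiplicity `m + q` on `ker(x₁ - x_j)` for `j ≥ 2` and `m` on `ker(x_i - x_j)` for
`2 ≤ i < j`. -/
def mixedD (K : Type) [Field K] (ℓ : ℕ) [NeZero ℓ] (m q : ℕ)
    (f : Fin ℓ → MvPolynomial (Fin ℓ) K) : Prop :=
  (∀ j : Fin ℓ, 0 < (j : ℕ) →
      (X 0 - X j : MvPolynomial (Fin ℓ) K) ^ (m + q) ∣ f 0 - f j) ∧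
  (∀ i j : Fin ℓ, 0 < (i : ℕ) → i < j →
      (X i - X j : MvPolynomial (Fin ℓ) K) ^ m ∣ f i - f j)

open scoped Matrix

theorem Finset.prod_pow_dvd_of_prime {α ι : Type*} [CommMonoidWithZero α] [IsCancelMulZero α]
    {s : Finset ι} {p : ι → α} {k : ι → ℕ} {d : α} (hp : ∀ i ∈ s, Prime (p i))
    (hnd : (s : Set ι).Pairwise fun i j => ¬p i ∣ p j) (h : ∀ i ∈ s, p i ^ k i ∣ d) :
    ∏ i ∈ s, p i ^ k i ∣ d := by
  classical
  induction s using Finset.induction_on with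
  | empty => simp
  | insert a s ha ih =>
    rw [Finset.prod_insert ha]
    obtain ⟨c, hc⟩ := ih (fun i hi => hp i (mem_insert_of_mem hi))
      (hnd.mono (coe_subset.2 (subset_insert a s))) (fun i hi => h i (mem_insert_of_mem hi))
    have hpa := hp a (mem_insert_self a s)
    have hndvd : ¬p a ∣ ∏ i ∈ s, p i ^ k i := fun hdvd => by
      obtain ⟨i, hi, hdi⟩ := hpa.exists_mem_finset_dvd hdvd
      exact hnd (mem_insert_self a s) (mem_insert_of_mem hi) (ne_of_mem_of_not_mem hi ha).symm
        (hpa.dvd_of_dvd_pow hdi)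
    obtain ⟨c', rfl⟩ :=
      hpa.pow_dvd_of_dvd_mul_left (k a) hndvd (hc ▸ h a (mem_insert_self a s))
    exact ⟨c', by rw [hc, mul_left_comm, ← mul_assoc]⟩

namespace Polynomial

theorem eq_zero_of_sum_C_mul_X_pow_eq_zero {R : Type*} [Semiring R] {n : ℕ} {v : Fin n → R}
    (h : ∑ k, C (v k) * X ^ (k : ℕ) = 0) : v = 0 := by
  funext k
  simpa [finsetSum_coeff, coeff_C_mul_X_pow, Fin.val_inj] using congrArg (coeff · k) h

section Roots

variable {R : Type*} [CommRing R] [IsDomain R]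

theorem X_sub_C_pow_succ_dvd_of_dvd_derivative [CharZero R] {P : R[X]} {a : R} {e : ℕ}
    (hP : (X - C a) ^ e ∣ derivative P) (ha : P.IsRoot a) : (X - C a) ^ (e + 1) ∣ P := by
  rcases eq_or_ne P 0 with rfl | hP0
  · exact dvd_zero _
  rcases eq_or_ne (derivative P) 0 with hd | hd
  · rw [eq_C_of_derivative_eq_zero hd, IsRoot, eval_C] at ha
    exact absurd (by rw [eq_C_of_derivative_eq_zero hd, ha, C_0]) hP0
  have hmult := (le_rootMultiplicity_iff hd).2 hP
  rw [derivative_rootMultiplicity_of_root ha] at hmult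
  have hpos := (rootMultiplicity_pos hP0).2 ha
  exact (le_rootMultiplicity_iff hP0).1 (by omega)

theorem eq_zero_of_isRoot_of_pow_dvd_derivative [CharZero R] {ι : Type*} [Fintype ι]
    {P : R[X]} {x : ι → R} (hx : Function.Injective x) (ε : ι → ℕ)
    (hroot : ∀ i, P.IsRoot (x i)) (hdvd : ∀ i, (X - C (x i)) ^ ε i ∣ derivative P)
    (hdeg : P.natDegree < ∑ i, (ε i + 1)) : P = 0 := by
  by_contra hP0
  have hprod : ∏ i, (X - C (x i)) ^ (ε i + 1) ∣ P :=
    Finset.prod_pow_dvd_of_prime (fun i _ => prime_X_sub_C (x i))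
      (fun i _ j _ hij h => hij (hx (by simpa [sub_eq_zero, eq_comm] using dvd_iff_isRoot.1 h)))
      (fun i _ => X_sub_C_pow_succ_dvd_of_dvd_derivative (hdvd i) (hroot i))
  have := natDegree_le_of_dvd hprod hP0
  rw [natDegree_prod_of_monic _ _ fun i _ => (monic_X_sub_C _).pow _] at this
  simp only [natDegree_pow, natDegree_X_sub_C, mul_one] at this
  omega

theorem eq_zero_of_sum_C_mul_prod_erase_eq_zero {ι : Type*} [Fintype ι] [DecidableEq ι]
    {x : ι → R} (hx : Function.Injective x) {v : ι → R}
    (h : ∑ k, C (v k) * ∏ s ∈ Finset.univ.erase k, (X - C (x s)) = 0) : v = 0 := by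
  funext r
  have hr := congrArg (eval (x r)) h
  rw [eval_finsetSum, Finset.sum_eq_single r] at hr
  · rw [eval_mul, eval_C, eval_prod, eval_zero] at hr
    refine (mul_eq_zero.1 hr).resolve_right (Finset.prod_ne_zero_iff.2 fun s hs => ?_)
    simpa [sub_eq_zero, hx.eq_iff, eq_comm] using (Finset.mem_erase.1 hs).1
  · intro k _ hk
    rw [eval_mul, eval_prod, Finset.prod_eq_zero
      (Finset.mem_erase.2 ⟨Ne.symm hk, Finset.mem_univ r⟩) (by simp), mul_zero]
  · simp

end Roots

section Antideriv

variable {R : Type*} [CommRing R] [Algebra ℚ R]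

noncomputable def antideriv (p : R[X]) : R[X] :=
  p.sum fun i a => C (((i + 1 : ℚ))⁻¹ • a) * X ^ (i + 1)

theorem coeff_antideriv_zero (p : R[X]) : (antideriv p).coeff 0 = 0 := by
  simp [antideriv, sum_def]

theorem coeff_antideriv_succ (p : R[X]) (i : ℕ) :
    (antideriv p).coeff (i + 1) = ((i + 1 : ℚ))⁻¹ • p.coeff i := by
  simp only [antideriv, coeff_sum, coeff_C_mul_X_pow, add_left_inj]
  rw [sum_def, Finset.sum_ite_eq]
  split_ifs with h
  · rfl
  · rw [notMem_support_iff.1 h, smul_zero]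

theorem derivative_antideriv (p : R[X]) : derivative (antideriv p) = p := by
  ext i
  rw [coeff_derivative, coeff_antideriv_succ,
    show ((i : R) + 1) = algebraMap ℚ R (i + 1) by simp, ← Algebra.commutes,
    ← Algebra.smul_def, smul_smul, mul_inv_cancel₀ (by positivity), one_smul]

theorem natDegree_antideriv_le (p : R[X]) : (antideriv p).natDegree ≤ p.natDegree + 1 := by
  refine natDegree_le_iff_coeff_eq_zero.2 fun i hi => ?_
  obtain ⟨j, rfl⟩ : ∃ j, i = j + 1 := ⟨i - 1, by omega⟩
  rw [coeff_antideriv_succ, coeff_eq_zero_of_natDegree_lt (by omega), smul_zero]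

variable [IsAddTorsionFree R]

theorem dvd_eval_sub_eval_of_derivative_eq_C_mul {φ ψ : R[X]} {c : R}
    (h : derivative φ = C c * ψ) (u v : R) : c ∣ φ.eval u - φ.eval v := by
  have hconst : derivative (φ - C c * antideriv ψ) = 0 := by
    rw [derivative_sub, derivative_C_mul, derivative_antideriv, h, sub_self]
  have hφ := eq_C_of_derivative_eq_zero hconst
  rw [sub_eq_iff_eq_add] at hφ
  rw [hφ]
  simp only [eval_add, eval_C, eval_mul]
  exact ⟨(antideriv ψ).eval u - (antideriv ψ).eval v, by ring⟩

theorem pow_dvd_eval_antideriv_sub {G : R[X]} {a b : R} {p r : ℕ}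
    (h : (X - C a) ^ p * (X - C b) ^ r ∣ G) :
    (b - a) ^ (p + r + 1) ∣ (antideriv G).eval b - (antideriv G).eval a := by
  obtain ⟨H, rfl⟩ := h
  -- substitute `X ↦ a + (b - a) X`
  set L : R[X] := C a + C (b - a) * X
  have hL0 : L.eval 0 = a := by simp [L]
  have hL1 : L.eval 1 = b := by simp [L]
  have hder : derivative ((antideriv ((X - C a) ^ p * (X - C b) ^ r * H)).comp L) =
      C ((b - a) ^ (p + r + 1)) * (X ^ p * (X - 1) ^ r * H.comp L) := by
    have ha : (X - C a).comp L = C (b - a) * X := by simp [L]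
    have hb : (X - C b).comp L = C (b - a) * (X - 1) := by simp [L]; ring
    rw [derivative_comp, derivative_antideriv, mul_comp, mul_comp, pow_comp, pow_comp, ha, hb,
      mul_pow, mul_pow]
    simp only [L, derivative_add, derivative_C, derivative_C_mul_X, zero_add, C_pow]
    ring
  simpa only [eval_comp, hL0, hL1] using dvd_eval_sub_eval_of_derivative_eq_C_mul hder 1 0

end Antideriv

section TotallyHomogeneous

variable {σ R : Type*}

section CommSemiring

variable [CommSemiring R]

/-- `P` is homogeneous of degree `d` once the variable `X` is given degree one. -/
def IsTotallyHomogeneous (P : (MvPolynomial σ R)[X]) (d : ℕ) : Prop :=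
  ∀ i, (P.coeff i).IsHomogeneous (d - i) ∧ (d < i → P.coeff i = 0)

theorem IsTotallyHomogeneous.mul {P Q : (MvPolynomial σ R)[X]} {a b : ℕ}
    (hP : P.IsTotallyHomogeneous a) (hQ : Q.IsTotallyHomogeneous b) :
    (P * Q).IsTotallyHomogeneous (a + b) := by
  intro N
  rw [coeff_mul]
  refine ⟨MvPolynomial.IsHomogeneous.sum _ _ _ fun x hx => ?_, fun hN => ?_⟩
  · rw [Finset.HasAntidiagonal.mem_antidiagonal] at hx
    by_cases hu : a < x.1
    · simpa [(hP x.1).2 hu] using isHomogeneous_zero _ _ _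
    by_cases hv : b < x.2
    · simpa [(hQ x.2).2 hv] using isHomogeneous_zero _ _ _
    convert (hP x.1).1.mul (hQ x.2).1 using 1
    omega
  · refine Finset.sum_eq_zero fun x hx => ?_
    rw [Finset.HasAntidiagonal.mem_antidiagonal] at hx
    by_cases hu : a < x.1
    · rw [(hP x.1).2 hu, zero_mul]
    · rw [(hQ x.2).2 (by omega), mul_zero]

theorem isTotallyHomogeneous_one : (1 : (MvPolynomial σ R)[X]).IsTotallyHomogeneous 0 := by
  intro i
  rcases i with _ | i
  · simpa using MvPolynomial.isHomogeneous_one σ R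
  · simpa [coeff_one] using isHomogeneous_zero _ _ _

theorem IsTotallyHomogeneous.pow {P : (MvPolynomial σ R)[X]} {d : ℕ}
    (hP : P.IsTotallyHomogeneous d) (s : ℕ) : (P ^ s).IsTotallyHomogeneous (d * s) := by
  induction s with
  | zero => simpa using isTotallyHomogeneous_one
  | succ s ih => simpa [pow_succ, Nat.mul_succ] using ih.mul hP

theorem IsTotallyHomogeneous.prod {ι : Type*} (s : Finset ι) {P : ι → (MvPolynomial σ R)[X]}
    {d : ι → ℕ} (h : ∀ i ∈ s, (P i).IsTotallyHomogeneous (d i)) :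
    (∏ i ∈ s, P i).IsTotallyHomogeneous (∑ i ∈ s, d i) := by
  classical
  induction s using Finset.induction_on with
  | empty => simpa using isTotallyHomogeneous_one
  | insert a s ha ih =>
    rw [Finset.prod_insert ha, Finset.sum_insert ha]
    exact (h a (Finset.mem_insert_self a s)).mul
      (ih fun i hi => h i (Finset.mem_insert_of_mem hi))

theorem isTotallyHomogeneous_X : (X : (MvPolynomial σ R)[X]).IsTotallyHomogeneous 1 := by
  intro i
  rcases i with _ | _ | i
  · simpa using isHomogeneous_zero _ _ _
  · simpa using MvPolynomial.isHomogeneous_one σ R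
  · simpa [coeff_X] using isHomogeneous_zero _ _ _

theorem IsTotallyHomogeneous.natDegree_le {P : (MvPolynomial σ R)[X]} {d : ℕ}
    (hP : P.IsTotallyHomogeneous d) : P.natDegree ≤ d :=
  natDegree_le_iff_coeff_eq_zero.2 fun i hi => (hP i).2 hi

theorem IsTotallyHomogeneous.eval {P : (MvPolynomial σ R)[X]} {d : ℕ}
    (hP : P.IsTotallyHomogeneous d) {a : MvPolynomial σ R} (ha : a.IsHomogeneous 1) :
    (P.eval a).IsHomogeneous d := by
  rw [eval_eq_sum_range]
  refine MvPolynomial.IsHomogeneous.sum _ _ _ fun i _ => ?_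
  by_cases hi : d < i
  · simpa [(hP i).2 hi] using isHomogeneous_zero _ _ _
  · convert (hP i).1.mul (ha.pow i) using 1
    omega

end CommSemiring

variable [CommRing R]

theorem isTotallyHomogeneous_X_sub_C {a : MvPolynomial σ R} (ha : a.IsHomogeneous 1) :
    (X - C a).IsTotallyHomogeneous 1 := by
  intro i
  rcases i with _ | _ | i
  · simpa using ha.neg
  · simpa using MvPolynomial.isHomogeneous_one σ R
  · simpa [coeff_X, coeff_C] using isHomogeneous_zero _ _ _

theorem IsTotallyHomogeneous.antideriv [Algebra ℚ R] {P : (MvPolynomial σ R)[X]} {d : ℕ}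
    (hP : P.IsTotallyHomogeneous d) : (antideriv P).IsTotallyHomogeneous (d + 1) := by
  intro i
  rcases i with _ | i
  · simpa [coeff_antideriv_zero] using isHomogeneous_zero _ _ _
  refine ⟨?_, fun hi => by rw [coeff_antideriv_succ, (hP i).2 (by omega), smul_zero]⟩
  rw [coeff_antideriv_succ, Nat.add_sub_add_right]
  exact fun m hm => (hP i).1 fun h => hm (by rw [MvPolynomial.coeff_smul, h, smul_zero])

end TotallyHomogeneous

end Polynomial

namespace Matrix

variable {ι R : Type*} [Fintype ι] [DecidableEq ι] [CommRing R]

theorem dvd_det_of_forall_dvd_row (A : Matrix ι ι R) {i : ι} {c : R} (h : ∀ k, c ∣ A i k) :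
    c ∣ A.det := by
  choose r hr using h
  have hA : A = A.updateRow i (c • r) := by
    ext j k
    by_cases hj : j = i
    · subst hj; simp [hr]
    · simp [hj]
  rw [hA, det_updateRow_smul]
  exact dvd_mul_right _ _

theorem dvd_det_of_forall_dvd_row_sub (A : Matrix ι ι R) {i j : ι} (hij : i ≠ j) {c : R}
    (h : ∀ k, c ∣ A i k - A j k) : c ∣ A.det := by
  rw [← det_updateRow_add_smul_self A hij (-1)]
  exact dvd_det_of_forall_dvd_row _ (i := i) (by simpa [sub_eq_add_neg] using h)

end Matrix

namespace MvPolynomial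

theorem isHomogeneous_det {ι σ R : Type*} [Fintype ι] [DecidableEq ι] [CommRing R]
    {A : Matrix ι ι (MvPolynomial σ R)} {δ : ι → ℕ}
    (h : ∀ i k, (A i k).IsHomogeneous (δ k)) :
    A.det.IsHomogeneous (∑ k, δ k) := by
  rw [Matrix.det_apply]
  refine IsHomogeneous.sum _ _ _ fun σ _ => ?_
  have hprod := IsHomogeneous.prod _ _ _ fun k (_ : k ∈ Finset.univ) => h (σ k) k
  rcases Int.units_eq_one_or (Equiv.Perm.sign σ) with hs | hs <;> simp [hs, hprod, hprod.neg]

theorem IsHomogeneous.exists_eq_C_mul_of_dvd {σ R : Type*} [CommRing R] [IsDomain R]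
    {p Q : MvPolynomial σ R} {d : ℕ} (hp : p.IsHomogeneous d) (hQ : Q.IsHomogeneous d)
    (hQ0 : Q ≠ 0) (hdvd : Q ∣ p) : ∃ c, p = C c * Q := by
  obtain ⟨h, rfl⟩ := hdvd
  rcases eq_or_ne h 0 with rfl | h0
  · exact ⟨0, by simp⟩
  have hdeg := totalDegree_mul_of_isDomain hQ0 h0
  rw [hp.totalDegree (mul_ne_zero hQ0 h0), hQ.totalDegree hQ0] at hdeg
  have hC := totalDegree_eq_zero_iff_eq_C.1 (show h.totalDegree = 0 by omega)
  exact ⟨h.coeff 0, by rw [mul_comm, ← hC]⟩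

theorem prime_X_sub_X {R : Type*} [CommRing R] [IsDomain R] {n : ℕ} {i j : Fin (n + 1)}
    (hij : i ≠ j) : Prime (X i - X j : MvPolynomial (Fin (n + 1)) R) := by
  -- move `i` to `0`, then `X 0 - X j'` becomes `X - C (X j')` in `(MvPolynomial (Fin n) R)[X]`
  set e := (renameEquiv R (Equiv.swap i 0)).trans (finSuccEquiv R n)
  obtain ⟨k, hk⟩ := Fin.exists_succ_eq_of_ne_zero
    (show Equiv.swap i 0 j ≠ 0 by
      rw [Ne, Equiv.swap_apply_eq_iff, Equiv.swap_apply_right]; exact hij.symm)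
  have himg : e (X i - X j) = Polynomial.X - Polynomial.C (X k) := by
    simp [e, ← hk, finSuccEquiv_X_zero, finSuccEquiv_X_succ]
  exact (MulEquiv.prime_iff e).1 (himg ▸ Polynomial.prime_X_sub_C _)

theorem not_X_sub_X_dvd {σ R : Type*} [CommRing R] [Nontrivial R] {i j k l : σ} (hkl : k ≠ l)
    (h : ¬(i = k ∧ j = l)) (h' : ¬(i = l ∧ j = k)) :
    ¬(X i - X j : MvPolynomial σ R) ∣ X k - X l := by
  classical
  rintro ⟨u, hu⟩
  by_cases hk : i ≠ k ∧ j ≠ k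
  · have := congrArg (eval fun s => if s = k then 1 else 0) hu
    simp [hk.1, hk.2, hkl.symm] at this
  · have hl : i ≠ l ∧ j ≠ l := by grind
    have := congrArg (eval fun s => if s = l then 1 else 0) hu
    simp [hl.1, hl.2, hkl] at this

end MvPolynomial

section TypeA

variable {K : Type} [Field K] {n m q : ℕ}

local notation "S" => MvPolynomial (Fin (n + 1)) K

def ltPairs (n : ℕ) : Finset (Fin (n + 1) × Fin (n + 1)) := Finset.univ.filter fun p => p.1 < p.2

theorem mem_ltPairs {p : Fin (n + 1) × Fin (n + 1)} : p ∈ ltPairs n ↔ p.1 < p.2 := by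
  simp [ltPairs]

def mixedMult (m q : ℕ) (p : Fin (n + 1) × Fin (n + 1)) : ℕ := if p.1 = 0 then m + q else m

/-- The defining polynomial `Q` of the multiarrangement. -/
noncomputable def mixedQ (K : Type) [Field K] (n m q : ℕ) : MvPolynomial (Fin (n + 1)) K :=
  ∏ p ∈ ltPairs n, (X p.1 - X p.2) ^ mixedMult m q p

theorem sum_mixedMult (n m q : ℕ) :
    ∑ p ∈ ltPairs n, mixedMult m q p = m * ∑ j ∈ Finset.range (n + 1), j + n * q := by
  have hinner (j : Fin (n + 1)) :
      ∑ i ∈ Finset.Iio j, (if i = 0 then m + q else m) = m * j + if 0 < j then q else 0 := by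
    have hmult (i : Fin (n + 1)) : (if i = 0 then m + q else m) = m + if i = 0 then q else 0 := by
      split_ifs <;> rfl
    simp only [hmult, Finset.sum_add_distrib, Finset.sum_const, Fin.card_Iio, smul_eq_mul,
      Finset.sum_ite_eq', Finset.mem_Iio, mul_comm]
  rw [ltPairs, Finset.sum_filter, Fintype.sum_prod_type_right]
  simp only [mixedMult, ← Finset.sum_filter, Finset.filter_gt_eq_Iio, hinner]
  rw [Finset.sum_add_distrib, ← Finset.mul_sum, Fin.sum_univ_eq_sum_range (fun j => j),
    Fin.sum_univ_succ]
  simp [Fin.succ_pos]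

theorem sum_exponents_odd (n b q : ℕ) :
    ∑ k : Fin n, (b * (n + 1) + k + q + 1) = ∑ p ∈ ltPairs n, mixedMult (2 * b + 1) q p := by
  have h := Finset.sum_range_id_mul_two (n + 1)
  rw [Finset.sum_range_succ, add_tsub_cancel_right] at h
  rw [sum_mixedMult, Fin.sum_univ_eq_sum_range (fun k => b * (n + 1) + k + q + 1),
    Finset.sum_range_succ, Finset.sum_add_distrib, Finset.sum_add_distrib, Finset.sum_add_distrib]
  simp only [Finset.sum_const, Finset.card_range, smul_eq_mul]
  linear_combination b * h.symm

theorem sum_exponents_even (n b q : ℕ) :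
    ∑ _k : Fin n, ((b + 1) * (n + 1) + q) = ∑ p ∈ ltPairs n, mixedMult (2 * b + 2) q p := by
  have h := Finset.sum_range_id_mul_two (n + 1)
  rw [add_tsub_cancel_right] at h
  simp only [sum_mixedMult, Finset.sum_const, Finset.card_univ, Fintype.card_fin, smul_eq_mul]
  linear_combination (b + 1) * h.symm

theorem isHomogeneous_mixedQ :
    (mixedQ K n m q).IsHomogeneous (∑ p ∈ ltPairs n, mixedMult m q p) :=
  IsHomogeneous.prod _ _ _ fun p _ => by
    simpa using ((isHomogeneous_X K p.1).sub (isHomogeneous_X K p.2)).pow (mixedMult m q p)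

theorem mixedQ_ne_zero : mixedQ K n m q ≠ 0 :=
  Finset.prod_ne_zero_iff.2 fun _ hp =>
    pow_ne_zero _ (sub_ne_zero.2 fun h => (mem_ltPairs.1 hp).ne (X_injective h))

/-- The conditions of `mixedD` on a vector `f` with `f 0 = 0`, in terms of `v j = f (j + 1)`. -/
def reducedMixedD (K : Type) [Field K] (n m q : ℕ) (v : Fin n → MvPolynomial (Fin (n + 1)) K) :
    Prop :=
  (∀ j, (X 0 - X j.succ) ^ (m + q) ∣ v j) ∧
    ∀ i j, i < j → (X i.succ - X j.succ) ^ m ∣ v i - v j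

theorem reducedMixedD_of_mixedD {f : Fin (n + 1) → S}
    (hf : mixedD K (n + 1) m q f) : reducedMixedD K n m q fun j => f j.succ - f 0 :=
  ⟨fun j => dvd_sub_comm.1 (hf.1 j.succ j.succ_pos), fun i j hij => by
    simpa using hf.2 i.succ j.succ i.succ_pos (Fin.succ_lt_succ_iff.2 hij)⟩

theorem mixedD_of_forall_succ {f : Fin (n + 1) → S}
    (h0 : ∀ j : Fin n, (X 0 - X j.succ) ^ (m + q) ∣ f 0 - f j.succ)
    (h1 : ∀ i j : Fin n, i ≠ j → (X i.succ - X j.succ) ^ m ∣ f i.succ - f j.succ) :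
    mixedD K (n + 1) m q f := by
  refine ⟨fun j hj => ?_, fun i j hi hij => ?_⟩
  · obtain ⟨j, rfl⟩ := Fin.exists_succ_eq_of_ne_zero (Fin.pos_iff_ne_zero.1 hj)
    exact h0 j
  · obtain ⟨i, rfl⟩ := Fin.exists_succ_eq_of_ne_zero (Fin.pos_iff_ne_zero.1 hi)
    obtain ⟨j, rfl⟩ := Fin.exists_succ_eq_of_ne_zero (i.succ_pos.trans hij).ne'
    exact h1 i j (Fin.succ_lt_succ_iff.1 hij).ne

theorem mixedQ_dvd_det (A : Matrix (Fin n) (Fin n) S)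
    (hA : ∀ k, reducedMixedD K n m q fun j => A j k) : mixedQ K n m q ∣ A.det := by
  have hprime (p) (hp : p ∈ ltPairs n) : Prime (X p.1 - X p.2 : S) :=
    prime_X_sub_X (mem_ltPairs.1 hp).ne
  have hndvd : (ltPairs n : Set (Fin (n + 1) × Fin (n + 1))).Pairwise
      fun p p' => ¬(X p.1 - X p.2 : S) ∣ X p'.1 - X p'.2 := by
    intro p hp p' hp' hne
    rw [Finset.mem_coe, mem_ltPairs] at hp hp'
    exact not_X_sub_X_dvd hp'.ne (fun h => hne (Prod.ext h.1 h.2))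
      fun h => hp.asymm (h.2 ▸ h.1 ▸ hp')
  refine Finset.prod_pow_dvd_of_prime hprime hndvd fun ⟨i, j⟩ hp => ?_
  have hij : i < j := mem_ltPairs.1 hp
  obtain ⟨j, rfl⟩ :=
    Fin.exists_succ_eq_of_ne_zero (Fin.pos_iff_ne_zero.1 (i.zero_le.trans_lt hij))
  cases i using Fin.cases with
  | zero => simpa [mixedMult] using A.dvd_det_of_forall_dvd_row fun k => (hA k).1 j
  | succ i =>
    have hij := Fin.succ_lt_succ_iff.1 hij
    simpa [mixedMult, Fin.succ_ne_zero] using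
      A.dvd_det_of_forall_dvd_row_sub hij.ne fun k => (hA k).2 i j hij

def reducedMatrix (θ : Fin n → Fin (n + 1) → S) : Matrix (Fin n) (Fin n) S :=
  Matrix.of fun j k => θ k j.succ

section Saito

variable {θ : Fin n → Fin (n + 1) → MvPolynomial (Fin (n + 1)) K}

theorem reducedMixedD_reducedMatrix_col (hθ0 : ∀ k, θ k 0 = 0)
    (hθ : ∀ k, mixedD K (n + 1) m q (θ k)) (k : Fin n) :
    reducedMixedD K n m q fun j => reducedMatrix θ j k := by
  simpa [reducedMatrix, hθ0] using reducedMixedD_of_mixedD (hθ k)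

theorem sum_smul_cons_one_apply (y : Fin (n + 1) → S)
    (i : Fin (n + 1)) :
    (∑ j, y j • (Fin.cons 1 θ : Fin (n + 1) → Fin (n + 1) → S) j) i =
      y 0 + ∑ k, θ k i * Fin.tail y k := by
  simp [Finset.sum_apply, Fin.sum_univ_succ, Fin.tail, mul_comm]

theorem eq_sum_smul_cons_one_iff (hθ0 : ∀ k, θ k 0 = 0)
    {g y : Fin (n + 1) → S} :
    g = ∑ j, y j • (Fin.cons 1 θ : Fin (n + 1) → Fin (n + 1) → S) j ↔
      y 0 = g 0 ∧ reducedMatrix θ *ᵥ Fin.tail y = fun j => g j.succ - g 0 := by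
  have hmulVec (j : Fin n) :
      (reducedMatrix θ *ᵥ Fin.tail y) j = ∑ k, θ k j.succ * Fin.tail y k := rfl
  constructor
  · rintro rfl
    refine ⟨by rw [sum_smul_cons_one_apply]; simp [hθ0], funext fun j => ?_⟩
    rw [hmulVec, sum_smul_cons_one_apply, sum_smul_cons_one_apply]
    simp [hθ0]
  · rintro ⟨h0, hM⟩
    funext i
    cases i using Fin.cases with
    | zero => rw [sum_smul_cons_one_apply]; simp [hθ0, h0]
    | succ j =>
      rw [sum_smul_cons_one_apply, ← hmulVec, hM, h0]
      ring

theorem exists_mulVec_eq_of_det_eq (hθ0 : ∀ k, θ k 0 = 0)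
    (hθ : ∀ k, mixedD K (n + 1) m q (θ k))
    {c : K} (hc : c ≠ 0) (hdet : (reducedMatrix θ).det = C c * mixedQ K n m q)
    {b : Fin n → S} (hb : reducedMixedD K n m q b) :
    ∃ t, reducedMatrix θ *ᵥ t = b := by
  set M := reducedMatrix θ
  have hcramer (k : Fin n) : mixedQ K n m q ∣ M.cramer b k := by
    rw [Matrix.cramer_apply]
    refine mixedQ_dvd_det _ fun k' => ?_
    by_cases hk : k' = k
    · simpa [Matrix.updateCol_apply, hk] using hb
    · simpa [Matrix.updateCol_apply, hk] using reducedMixedD_reducedMatrix_col hθ0 hθ k'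
  choose s hs using hcramer
  -- Cramer's rule: `Q • (M *ᵥ s) = M *ᵥ cramer M b = det M • b = Q • (C c • b)`
  have hMs : M *ᵥ s = (C c : S) • b := by
    refine smul_right_injective _ (mixedQ_ne_zero (K := K) (n := n) (m := m) (q := q)) ?_
    have h := M.mulVec_cramer b
    rw [show M.cramer b = mixedQ K n m q • s from funext hs, Matrix.mulVec_smul, hdet,
      mul_comm, mul_smul] at h
    exact h
  refine ⟨(C c⁻¹ : S) • s, ?_⟩
  rw [Matrix.mulVec_smul, hMs, smul_smul, ← C_mul, inv_mul_cancel₀ hc, C_1, one_smul]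

theorem isBasisOf_cons_one_of_det_eq (hθ0 : ∀ k, θ k 0 = 0)
    (hθ : ∀ k, mixedD K (n + 1) m q (θ k)) {c : K} (hc : c ≠ 0)
    (hdet : (reducedMatrix θ).det = C c * mixedQ K n m q) :
    isBasisOf (mixedD K (n + 1) m q) (Fin.cons 1 θ) := by
  refine ⟨Fin.cases ⟨fun _ _ => by simp, fun _ _ _ _ => by simp⟩ hθ, fun g hg => ?_⟩
  obtain ⟨t, ht⟩ := exists_mulVec_eq_of_det_eq hθ0 hθ hc hdet (reducedMixedD_of_mixedD hg)
  refine ⟨Fin.cons (g 0) t, (eq_sum_smul_cons_one_iff hθ0).2 ⟨rfl, ht⟩, fun y hy => ?_⟩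
  obtain ⟨hy0, hy⟩ := (eq_sum_smul_cons_one_iff hθ0).1 hy
  have hdet0 : (reducedMatrix θ).det ≠ 0 := by
    rw [hdet]
    exact mul_ne_zero (C_ne_zero.2 hc) mixedQ_ne_zero
  rw [← Fin.cons_self_tail y, hy0,
    Matrix.mulVec_injective_of_det_ne_zero hdet0 (hy.trans ht.symm)]

theorem isBasisOf_cons_one (hθ0 : ∀ k, θ k 0 = 0) (hθ : ∀ k, mixedD K (n + 1) m q (θ k))
    {δ : Fin n → ℕ} (hhom : ∀ k j, (θ k j).IsHomogeneous (δ k))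
    (hδ : ∑ k, δ k = ∑ p ∈ ltPairs n, mixedMult m q p)
    (hindep : ∀ v, reducedMatrix θ *ᵥ v = 0 → v = 0) :
    isBasisOf (mixedD K (n + 1) m q) (Fin.cons 1 θ) := by
  have hdet0 : (reducedMatrix θ).det ≠ 0 := fun h => by
    obtain ⟨v, hv, hMv⟩ := Matrix.exists_mulVec_eq_zero_iff.2 h
    exact hv (hindep v hMv)
  have hdethom : (reducedMatrix θ).det.IsHomogeneous (∑ p ∈ ltPairs n, mixedMult m q p) :=
    hδ ▸ isHomogeneous_det fun j k => hhom k j.succ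
  obtain ⟨c, hc⟩ := hdethom.exists_eq_C_mul_of_dvd isHomogeneous_mixedQ mixedQ_ne_zero
    (mixedQ_dvd_det _ (reducedMixedD_reducedMatrix_col hθ0 hθ))
  exact isBasisOf_cons_one_of_det_eq hθ0 hθ (fun h0 => hdet0 (by simp [hc, h0])) hc

theorem homogOf_cons_one {d : ℕ → ℕ}
    (h : ∀ (k : Fin n) j, (θ k j).IsHomogeneous (d (k + 1))) (j : Fin (n + 1)) :
    homogOf ((Fin.cons 1 θ : Fin (n + 1) → Fin (n + 1) → S) j)
      (if (j : ℕ) = 0 then 0 else d j) := by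
  cases j using Fin.cases with
  | zero => exact fun _ => Or.inr (by simpa using isHomogeneous_one _ _)
  | succ k => exact fun i => Or.inr (by simpa using h k i)

end Saito

end TypeA

section Integrals

open Polynomial (antideriv IsTotallyHomogeneous)

variable {K : Type} [Field K] {n : ℕ}

local notation "S" => MvPolynomial (Fin (n + 1)) K
local notation "t" => (Polynomial.X : Polynomial S)

noncomputable def baseIntegrand (a b : ℕ) : Polynomial S :=
  (t - Polynomial.C (X 0)) ^ a * ∏ s : Fin n, (t - Polynomial.C (X s.succ)) ^ b

theorem isTotallyHomogeneous_baseIntegrand (a b : ℕ) :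
    (baseIntegrand (K := K) (n := n) a b).IsTotallyHomogeneous (a + n * b) := by
  have h := ((Polynomial.isTotallyHomogeneous_X_sub_C (isHomogeneous_X K 0)).pow a).mul
    (IsTotallyHomogeneous.prod Finset.univ fun (s : Fin n) _ =>
      (Polynomial.isTotallyHomogeneous_X_sub_C (isHomogeneous_X K s.succ)).pow b)
  simpa [baseIntegrand] using h

theorem baseIntegrand_monic (a b : ℕ) : (baseIntegrand (K := K) (n := n) a b).Monic :=
  ((Polynomial.monic_X_sub_C _).pow a).mul
    (Polynomial.monic_prod_of_monic _ _ fun _ _ => (Polynomial.monic_X_sub_C _).pow b)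

theorem dvd_baseIntegrand_zero_succ (a b : ℕ) (j : Fin n) :
    (t - Polynomial.C (X j.succ)) ^ b * (t - Polynomial.C (X 0)) ^ a ∣ baseIntegrand a b := by
  rw [mul_comm]
  exact mul_dvd_mul_left _ (Finset.dvd_prod_of_mem _ (Finset.mem_univ j))

theorem pow_dvd_baseIntegrand (a b : ℕ) (j : Fin (n + 1)) :
    (t - Polynomial.C (X j)) ^ (if j = 0 then a else b) ∣ baseIntegrand a b := by
  cases j using Fin.cases with
  | zero => exact dvd_mul_right _ _
  | succ j =>
    simpa [baseIntegrand, Fin.succ_ne_zero] using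
      dvd_mul_of_dvd_right (Finset.dvd_prod_of_mem _ (Finset.mem_univ j)) _

theorem isTotallyHomogeneous_prod_erase (k : Fin n) :
    (∏ s ∈ Finset.univ.erase k, (t - Polynomial.C (X s.succ))).IsTotallyHomogeneous
      (n - 1) := by
  simpa [Finset.card_erase_of_mem] using IsTotallyHomogeneous.prod (Finset.univ.erase k)
    fun s _ => Polynomial.isTotallyHomogeneous_X_sub_C (isHomogeneous_X K s.succ)

theorem dvd_baseIntegrand_succ_succ (a b : ℕ) {i j : Fin n} (hij : i ≠ j) :
    (t - Polynomial.C (X j.succ)) ^ b * (t - Polynomial.C (X i.succ)) ^ b ∣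
      baseIntegrand a b := by
  refine dvd_mul_of_dvd_right ?_ _
  have h := Finset.prod_dvd_prod_of_subset {j, i} Finset.univ
    (fun s => (t - Polynomial.C (X s.succ)) ^ b) (Finset.subset_univ _)
  rwa [Finset.prod_pair hij.symm] at h

variable [CharZero K]

noncomputable def integralVec (G : Polynomial S) (j : Fin (n + 1)) : S :=
  (antideriv G).eval (X j) - (antideriv G).eval (X 0)

theorem integralVec_zero (G : Polynomial S) : integralVec G 0 = 0 :=
  sub_self _

theorem pow_dvd_integralVec_sub {G : Polynomial S} {i j : Fin (n + 1)} {p r : ℕ}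
    (h : (t - Polynomial.C (X j)) ^ p * (t - Polynomial.C (X i)) ^ r ∣ G) :
    (X i - X j) ^ (p + r + 1) ∣ integralVec G i - integralVec G j := by
  rw [integralVec, integralVec, sub_sub_sub_cancel_right]
  exact Polynomial.pow_dvd_eval_antideriv_sub h

theorem Polynomial.IsTotallyHomogeneous.isHomogeneous_integralVec {G : Polynomial S} {d : ℕ}
    (hG : G.IsTotallyHomogeneous d) (j : Fin (n + 1)) :
    (integralVec G j).IsHomogeneous (d + 1) :=
  (hG.antideriv.eval (isHomogeneous_X K j)).sub (hG.antideriv.eval (isHomogeneous_X K 0))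

theorem natDegree_antideriv_baseIntegrand_mul_le (a b : ℕ) {B : Polynomial S}
    (hB : B.natDegree < n) : (antideriv (baseIntegrand a b * B)).natDegree ≤ a + n * b + n := by
  have := (isTotallyHomogeneous_baseIntegrand (K := K) (n := n) a b).natDegree_le
  have := Polynomial.natDegree_mul_le (p := baseIntegrand (K := K) a b) (q := B)
  have := (baseIntegrand a b * B).natDegree_antideriv_le
  omega

theorem sum_C_mul_eq_zero_of_mulVec_eq_zero {a b : ℕ} {B : Fin n → Polynomial S}
    (hB : ∀ k, (B k).natDegree < n) {v : Fin n → S}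
    (hv : reducedMatrix (fun k => integralVec (baseIntegrand a b * B k)) *ᵥ v = 0) :
    ∑ k, Polynomial.C (v k) * B k = 0 := by
  set F : Fin n → Polynomial S := fun k => antideriv (baseIntegrand a b * B k)
  set P : Polynomial S := ∑ k, Polynomial.C (v k) * (F k - Polynomial.C ((F k).eval (X 0)))
  have hderiv : Polynomial.derivative P = baseIntegrand a b * ∑ k, Polynomial.C (v k) * B k := by
    simp only [P, F, map_sum, Polynomial.derivative_C_mul, Polynomial.derivative_sub,
      Polynomial.derivative_antideriv, Polynomial.derivative_C, sub_zero, Finset.mul_sum]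
    exact Finset.sum_congr rfl fun k _ => by ring
  have hroot (j : Fin (n + 1)) : P.IsRoot (X j) := by
    cases j using Fin.cases with
    | zero => simp [P, Polynomial.eval_finsetSum]
    | succ j =>
      simpa [P, F, Polynomial.eval_finsetSum, reducedMatrix, Matrix.mulVec, dotProduct,
        integralVec, mul_comm] using congrFun hv j
  have hdeg : P.natDegree < ∑ j : Fin (n + 1), ((if j = 0 then a else b) + 1) := by
    have hsum : ∑ j : Fin (n + 1), ((if j = 0 then a else b) + 1) = a + n * b + n + 1 := by
      simp [Fin.sum_univ_succ, Fin.succ_ne_zero]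
      ring
    refine hsum ▸ Nat.lt_succ_of_le (Polynomial.natDegree_sum_le_of_forall_le _ _ fun k _ => ?_)
    calc _ ≤ (F k - Polynomial.C ((F k).eval (X 0))).natDegree :=
          Polynomial.natDegree_C_mul_le _ _
      _ = (F k).natDegree := Polynomial.natDegree_sub_C
      _ ≤ a + n * b + n := natDegree_antideriv_baseIntegrand_mul_le a b (hB k)
  have hP : P = 0 := Polynomial.eq_zero_of_isRoot_of_pow_dvd_derivative X_injective
    (fun j => if j = 0 then a else b) hroot
    (fun j => hderiv ▸ dvd_mul_of_dvd_left (pow_dvd_baseIntegrand a b j) _) hdeg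
  have h0 := congrArg Polynomial.derivative hP
  rw [hderiv, Polynomial.derivative_zero] at h0
  exact (mul_eq_zero.1 h0).resolve_left (baseIntegrand_monic a b).ne_zero

theorem mixedD_integralVec_odd (b q : ℕ) (B : Polynomial S) :
    mixedD K (n + 1) (2 * b + 1) q (integralVec (baseIntegrand (b + q) b * B)) := by
  refine mixedD_of_forall_succ (fun j => ?_) fun i j hij => ?_
  · convert pow_dvd_integralVec_sub (dvd_mul_of_dvd_left (dvd_baseIntegrand_zero_succ _ _ j) B)
      using 2
    ring
  · convert pow_dvd_integralVec_sub (dvd_mul_of_dvd_left (dvd_baseIntegrand_succ_succ _ _ hij) B)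
      using 2
    ring

theorem mixedD_integralVec_even (b q : ℕ) (k : Fin n) :
    mixedD K (n + 1) (2 * b + 2) q (integralVec (baseIntegrand (b + 1 + q) b *
      ∏ s ∈ Finset.univ.erase k, (t - Polynomial.C (X s.succ)))) := by
  refine mixedD_of_forall_succ (fun j => ?_) fun i j hij => ?_
  · convert pow_dvd_integralVec_sub (dvd_mul_of_dvd_left (dvd_baseIntegrand_zero_succ _ _ j) _)
      using 2
    ring
  have hfac {s : Fin n} (hs : s ≠ k) :
      t - Polynomial.C (X s.succ) ∣
        ∏ s ∈ Finset.univ.erase k, (t - Polynomial.C (X s.succ)) :=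
    Finset.dvd_prod_of_mem _ (Finset.mem_erase.2 ⟨hs, Finset.mem_univ s⟩)
  have hH := dvd_baseIntegrand_succ_succ (K := K) (b + 1 + q) b hij
  -- at most one of `t - x_{i+1}`, `t - x_{j+1}` is missing from the product
  by_cases hjk : j = k
  · have h := mul_dvd_mul hH (hfac (hjk ▸ hij))
    rw [mul_assoc, ← pow_succ] at h
    convert pow_dvd_integralVec_sub h using 2
    ring
  · have h := mul_dvd_mul hH (hfac hjk)
    rw [mul_right_comm, ← pow_succ] at h
    convert pow_dvd_integralVec_sub h using 2
    ring

theorem exists_isBasisOf_mixedD_odd (b q : ℕ) :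
    ∃ θ : Fin (n + 1) → Fin (n + 1) → S, isBasisOf (mixedD K (n + 1) (2 * b + 1) q) θ ∧
      ∀ j : Fin (n + 1), homogOf (θ j) (if (j : ℕ) = 0 then 0 else b * (n + 1) + j + q) := by
  have hG (k : Fin n) :
      (baseIntegrand (b + q) b * t ^ (k : ℕ)).IsTotallyHomogeneous (b * (n + 1) + k + q) := by
    convert (isTotallyHomogeneous_baseIntegrand (b + q) b).mul
      (Polynomial.isTotallyHomogeneous_X.pow (k : ℕ)) using 1
    ring
  refine ⟨_, isBasisOf_cons_one (fun k => integralVec_zero _)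
    (fun k => mixedD_integralVec_odd b q _) (fun k j => (hG k).isHomogeneous_integralVec j)
    (sum_exponents_odd n b q) fun v hv => ?_,
    homogOf_cons_one (d := fun j => b * (n + 1) + j + q) fun k j => ?_⟩
  · exact Polynomial.eq_zero_of_sum_C_mul_X_pow_eq_zero
      (sum_C_mul_eq_zero_of_mulVec_eq_zero (fun k => by simp) hv)
  · convert (hG k).isHomogeneous_integralVec j using 1
    ring

theorem exists_isBasisOf_mixedD_even (b q : ℕ) :
    ∃ θ : Fin (n + 1) → Fin (n + 1) → S, isBasisOf (mixedD K (n + 1) (2 * b + 2) q) θ ∧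
      ∀ j : Fin (n + 1), homogOf (θ j) (if (j : ℕ) = 0 then 0 else (b + 1) * (n + 1) + q) := by
  set L : Fin n → Polynomial S := fun k =>
    ∏ s ∈ Finset.univ.erase k, (t - Polynomial.C (X s.succ))
  have hhom (k : Fin n) (j : Fin (n + 1)) :
      (integralVec (baseIntegrand (b + 1 + q) b * L k) j).IsHomogeneous
        ((b + 1) * (n + 1) + q) := by
    convert ((isTotallyHomogeneous_baseIntegrand (b + 1 + q) b).mul
      (isTotallyHomogeneous_prod_erase k)).isHomogeneous_integralVec j using 1
    zify [show 1 ≤ n from k.pos]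
    ring
  refine ⟨_, isBasisOf_cons_one (fun k => integralVec_zero _)
    (fun k => mixedD_integralVec_even b q k) hhom (sum_exponents_even n b q) fun v hv => ?_,
    homogOf_cons_one (d := fun _ => (b + 1) * (n + 1) + q) hhom⟩
  exact Polynomial.eq_zero_of_sum_C_mul_prod_erase_eq_zero
    (X_injective.comp (Fin.succ_injective n)) (sum_C_mul_eq_zero_of_mulVec_eq_zero
      (fun k => (isTotallyHomogeneous_prod_erase k).natDegree_le.trans_lt (by have := k.pos; omega))
      hv)

end Integrals

theorem stmt14_general {K : Type} [Field K] [CharZero K] (ℓ : ℕ) [NeZero ℓ]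
    (m q : ℕ) (hm : 1 ≤ m) :
    (Even m → ∃ θ : Fin ℓ → Fin ℓ → MvPolynomial (Fin ℓ) K,
        isBasisOf (mixedD K ℓ m q) θ ∧
        ∀ j : Fin ℓ, homogOf (θ j) (if (j : ℕ) = 0 then 0 else m * ℓ / 2 + q)) ∧
    (Odd m → ∃ θ : Fin ℓ → Fin ℓ → MvPolynomial (Fin ℓ) K,
        isBasisOf (mixedD K ℓ m q) θ ∧
        ∀ j : Fin ℓ, homogOf (θ j)
          (if (j : ℕ) = 0 then 0 else (m - 1) * ℓ / 2 + (j : ℕ) + q)) := by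
  obtain ⟨n, rfl⟩ : ∃ n, ℓ = n + 1 := ⟨ℓ - 1, (Nat.sub_add_cancel NeZero.one_le).symm⟩
  refine ⟨fun hm2 => ?_, fun ⟨b, hb⟩ => ?_⟩
  · obtain ⟨b, rfl⟩ : ∃ b, m = 2 * b + 2 := by
      obtain ⟨r, rfl⟩ := hm2
      exact ⟨r - 1, by omega⟩
    have h : (2 * b + 2) * (n + 1) / 2 = (b + 1) * (n + 1) := by
      rw [show (2 * b + 2) * (n + 1) = 2 * ((b + 1) * (n + 1)) by ring,
        Nat.mul_div_cancel_left _ two_pos]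
    simpa only [h] using exists_isBasisOf_mixedD_even b q
  · subst hb
    have h : (2 * b + 1 - 1) * (n + 1) / 2 = b * (n + 1) := by
      rw [Nat.add_sub_cancel, mul_assoc, Nat.mul_div_cancel_left _ two_pos]
    simpa only [h] using exists_isBasisOf_mixedD_odd b q

/-- Mixed multiplicity freeness for type `A` (Corollary): `(A; m, q)` is free with exponents
(besides the exponent `0` of the invariant direction) `{mℓ/2 + q, …, mℓ/2 + q}` for `m`
even and `{(m-1)ℓ/2 + 1 + q, …, (m-1)ℓ/2 + ℓ - 1 + q}` for `m` odd. -/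
theorem stmt14 {K : Type} [Field K] [CharZero K] (ℓ : ℕ) [NeZero ℓ] (hℓ : 2 ≤ ℓ)
    (m q : ℕ) (hm : 1 ≤ m) (hq : 1 ≤ q) :
    (Even m → ∃ θ : Fin ℓ → Fin ℓ → MvPolynomial (Fin ℓ) K,
        isBasisOf (mixedD K ℓ m q) θ ∧
        ∀ j : Fin ℓ, homogOf (θ j) (if (j : ℕ) = 0 then 0 else m * ℓ / 2 + q)) ∧
    (Odd m → ∃ θ : Fin ℓ → Fin ℓ → MvPolynomial (Fin ℓ) K,
        isBasisOf (mixedD K ℓ m q) θ ∧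
        ∀ j : Fin ℓ, homogOf (θ j)
          (if (j : ℕ) = 0 then 0 else (m - 1) * ℓ / 2 + (j : ℕ) + q)) :=
  stmt14_general ℓ m q hm
end
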